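/- arXiv:2502.09853 — 2 statements merged into one kernel-verified Lean document; each statement's English description precedes it below -/
import Mathlib

section
/- (Reverse Jensen inequality) If X₁,…,Xₙ are independent non-negative random variables, then for every ε > 0, E(exp{−Σ_{i=1}^n X_i}) ≤ exp{−e^{−ε} Σ_{i=1}^n E(X_i 1_{{X_i ≤ ε}})/P(X_i ≤ ε)}, i.e., ≤ exp{−e^{−ε} Σ_i E(X_i | X_i ≤ ε)} whenever each P(X_i ≤ ε) > 0. -/
/-!
Independence turns `E e^{-∑ Xᵢ}` into `∏ E e^{-Xᵢ}`, so it suffices to treat one variable `X`.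
Let `A = {X ≤ ε}`, `p = P(A)`, `m = E(X 1_A)/p ∈ [0, ε]` and `q = e^{-ε}`. On `A`,
`e^{-x} (1 + x) ≤ 1` gives `e^{-x} ≤ 1 - x e^{-x} ≤ 1 - q x`, and off `A`, `e^{-x} ≤ q`; hence
`E e^{-X} ≤ p (1 - q m) + (1 - p) q`, and both `1 - q m` and `q` are at most `e^{-q m}` because
`q m ≤ ε`.
-/

open MeasureTheory ProbabilityTheory Real

theorem Real.exp_neg_le_one_sub_exp_neg_mul {x ε : ℝ} (hx : 0 ≤ x) (hxε : x ≤ ε) :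
    exp (-x) ≤ 1 - exp (-ε) * x := by
  have h_one_add : exp (-x) * (1 + x) ≤ 1 := by
    calc exp (-x) * (1 + x) ≤ exp (-x) * exp x := by
          gcongr; linarith [add_one_le_exp x]
      _ = 1 := by rw [← exp_add, neg_add_cancel, exp_zero]
  have h_mono : exp (-ε) * x ≤ exp (-x) * x := by gcongr
  linarith

theorem Real.convex_comb_le_exp_neg {p m ε : ℝ} (hp₀ : 0 ≤ p) (hp₁ : p ≤ 1) (hm₀ : 0 ≤ m)
    (hmε : m ≤ ε) :
    p * (1 - exp (-ε) * m) + (1 - p) * exp (-ε) ≤ exp (-(exp (-ε) * m)) := by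
  have h_tangent : 1 - exp (-ε) * m ≤ exp (-(exp (-ε) * m)) := by
    linarith [add_one_le_exp (-(exp (-ε) * m))]
  have h_const : exp (-ε) ≤ exp (-(exp (-ε) * m)) := by
    have : exp (-ε) * m ≤ m := mul_le_of_le_one_left hm₀ (exp_le_one_iff.mpr (by linarith))
    gcongr
    linarith
  calc p * (1 - exp (-ε) * m) + (1 - p) * exp (-ε)
      ≤ p * exp (-(exp (-ε) * m)) + (1 - p) * exp (-(exp (-ε) * m)) := by
        gcongr
    _ = exp (-(exp (-ε) * m)) := by ring

namespace ProbabilityTheory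

variable {Ω : Type*} [MeasurableSpace Ω] {μ : Measure Ω} {X : Ω → ℝ} {ε : ℝ}

theorem integrable_exp_neg_of_nonneg [IsFiniteMeasure μ] (hX : Measurable X)
    (hnn : ∀ ω, 0 ≤ X ω) : Integrable (fun ω ↦ exp (-X ω)) μ := by
  refine .mono' (integrable_const 1) hX.neg.exp.aestronglyMeasurable (.of_forall fun ω ↦ ?_)
  rw [norm_of_nonneg (exp_pos _).le]
  exact exp_le_one_iff.mpr (neg_nonpos.mpr (hnn ω))

theorem integrableOn_setOf_le_of_nonneg [IsFiniteMeasure μ] (hX : Measurable X)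
    (hnn : ∀ ω, 0 ≤ X ω) : IntegrableOn X {ω | X ω ≤ ε} μ := by
  refine .mono' (integrable_const ε) hX.aestronglyMeasurable.restrict
    (ae_restrict_of_forall_mem (measurableSet_le hX measurable_const) fun ω hω ↦ ?_)
  rwa [norm_of_nonneg (hnn ω)]

theorem setIntegral_setOf_le_le_mul_measureReal [IsFiniteMeasure μ] (hX : Measurable X)
    (hnn : ∀ ω, 0 ≤ X ω) :
    ∫ ω in {ω | X ω ≤ ε}, X ω ∂μ ≤ ε * μ.real {ω | X ω ≤ ε} := by
  calc ∫ ω in {ω | X ω ≤ ε}, X ω ∂μ ≤ ∫ _ in {ω | X ω ≤ ε}, ε ∂μ :=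
        setIntegral_mono_on (integrableOn_setOf_le_of_nonneg hX hnn) (integrable_const ε)
          (measurableSet_le hX measurable_const) fun _ hω ↦ hω
    _ = ε * μ.real {ω | X ω ≤ ε} := by rw [setIntegral_const, smul_eq_mul, mul_comm]

theorem integral_exp_neg_le [IsProbabilityMeasure μ] (hX : Measurable X) (hnn : ∀ ω, 0 ≤ X ω) :
    ∫ ω, exp (-X ω) ∂μ ≤
      μ.real {ω | X ω ≤ ε} - exp (-ε) * ∫ ω in {ω | X ω ≤ ε}, X ω ∂μ
        + (1 - μ.real {ω | X ω ≤ ε}) * exp (-ε) := by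
  set A := {ω | X ω ≤ ε}
  have hA : MeasurableSet A := measurableSet_le hX measurable_const
  have h_int := integrable_exp_neg_of_nonneg (μ := μ) hX hnn
  have h_intA := integrableOn_setOf_le_of_nonneg (μ := μ) (ε := ε) hX hnn
  have h_on : ∫ ω in A, exp (-X ω) ∂μ ≤ ∫ ω in A, (1 - exp (-ε) * X ω) ∂μ :=
    setIntegral_mono_on h_int.integrableOn ((integrable_const 1).sub (h_intA.const_mul _)) hA
      fun ω hω ↦ exp_neg_le_one_sub_exp_neg_mul (hnn ω) hω
  have h_off : ∫ ω in Aᶜ, exp (-X ω) ∂μ ≤ ∫ _ in Aᶜ, exp (-ε) ∂μ :=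
    setIntegral_mono_on h_int.integrableOn (integrable_const _) hA.compl
      fun ω hω ↦ exp_le_exp.mpr (neg_le_neg (le_of_lt (not_le.mp hω)))
  rw [integral_sub (integrable_const 1) (h_intA.const_mul _), integral_const_mul,
    setIntegral_const, smul_eq_mul] at h_on
  rw [setIntegral_const, smul_eq_mul, probReal_compl_eq_one_sub hA] at h_off
  rw [← integral_add_compl hA h_int]
  linarith

theorem mgf_neg_one_le [IsProbabilityMeasure μ] (hX : Measurable X) (hnn : ∀ ω, 0 ≤ X ω)
    (hε : 0 ≤ ε) :
    mgf X μ (-1) ≤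
      exp (-exp (-ε) * ((∫ ω in {ω | X ω ≤ ε}, X ω ∂μ) / μ.real {ω | X ω ≤ ε})) := by
  set p := μ.real {ω | X ω ≤ ε}
  set M := ∫ ω in {ω | X ω ≤ ε}, X ω ∂μ
  have hp₀ : 0 ≤ p := measureReal_nonneg
  have hM₀ : 0 ≤ M := setIntegral_nonneg (measurableSet_le hX measurable_const) fun ω _ ↦ hnn ω
  have hMp : M ≤ ε * p := setIntegral_setOf_le_le_mul_measureReal hX hnn
  -- for `p = 0` this holds because `M ≤ ε p` forces `M = 0`, whatever `M / 0` is
  have hM : M = p * (M / p) := by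
    rcases hp₀.eq_or_lt with hp | hp
    · rw [← hp] at hMp ⊢; simp only [zero_mul]; linarith
    · rw [mul_div_cancel₀ _ hp.ne']
  calc mgf X μ (-1) = ∫ ω, exp (-X ω) ∂μ := by simp only [mgf, neg_one_mul]
    _ ≤ p - exp (-ε) * M + (1 - p) * exp (-ε) := integral_exp_neg_le hX hnn
    _ = p * (1 - exp (-ε) * (M / p)) + (1 - p) * exp (-ε) := by
        linear_combination (-exp (-ε)) * hM
    _ ≤ exp (-(exp (-ε) * (M / p))) :=
        convex_comb_le_exp_neg hp₀ measureReal_le_one (div_nonneg hM₀ hp₀)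
          (div_le_of_le_mul₀ hp₀ hε hMp)
    _ = exp (-exp (-ε) * (M / p)) := by rw [neg_mul]

end ProbabilityTheory

theorem reverse_jensen_general {Ω : Type*} [MeasurableSpace Ω] (Pr : Measure Ω)
    [IsProbabilityMeasure Pr] {n : ℕ} (X : Fin n → Ω → ℝ)
    (hmeas : ∀ i, Measurable (X i)) (hnn : ∀ i ω, 0 ≤ X i ω)
    (hindep : iIndepFun X Pr)
    (ε : ℝ) (hε : 0 < ε) :
    ∫ ω, Real.exp (-∑ i, X i ω) ∂Pr ≤
      Real.exp (-Real.exp (-ε) *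
        ∑ i, (∫ ω in {ω | X i ω ≤ ε}, X i ω ∂Pr) / (Pr {ω | X i ω ≤ ε}).toReal) := by
  calc ∫ ω, exp (-∑ i, X i ω) ∂Pr = ∏ i, mgf (X i) Pr (-1) := by
        rw [← hindep.mgf_sum hmeas Finset.univ]
        simp only [mgf, Finset.sum_apply, neg_one_mul]
    _ ≤ ∏ i, exp (-exp (-ε) *
          ((∫ ω in {ω | X i ω ≤ ε}, X i ω ∂Pr) / Pr.real {ω | X i ω ≤ ε})) :=
        Finset.prod_le_prod (fun _ _ ↦ mgf_nonneg)
          fun i _ ↦ mgf_neg_one_le (hmeas i) (hnn i) hε.le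
    _ = _ := by rw [← exp_sum, ← Finset.mul_sum]; rfl

/-- Reverse Jensen inequality: for independent nonnegative random
variables `X₁,…,Xₙ` and every `ε > 0` with `P(Xᵢ ≤ ε) > 0`,
`E(e^{−ΣXᵢ}) ≤ exp(−e^{−ε} Σᵢ E(Xᵢ | Xᵢ ≤ ε))`. -/
theorem reverse_jensen {Ω : Type*} [MeasurableSpace Ω] (Pr : Measure Ω)
    [IsProbabilityMeasure Pr] {n : ℕ} (X : Fin n → Ω → ℝ)
    (hmeas : ∀ i, Measurable (X i)) (hnn : ∀ i ω, 0 ≤ X i ω)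
    (hindep : iIndepFun X Pr)
    (ε : ℝ) (hε : 0 < ε) (hpos : ∀ i, 0 < Pr {ω | X i ω ≤ ε}) :
    ∫ ω, Real.exp (-∑ i, X i ω) ∂Pr ≤
      Real.exp (-Real.exp (-ε) *
        ∑ i, (∫ ω in {ω | X i ω ≤ ε}, X i ω ∂Pr) / (Pr {ω | X i ω ≤ ε}).toReal) :=
  reverse_jensen_general Pr X hmeas hnn hindep ε hε
end

section
/- Let α, θ > 0 and let μ be the measure on [0,∞) given by μ(dℓ) = δ₀(dℓ) + (Σ_{n≥0} (1/(n!(n+1)!)) (α²θ/2)^{n+1} ℓⁿ) 1_{[0,∞)}(ℓ) dℓ. Then μ has Laplace transform ∫_{[0,∞)} e^{−sℓ} μ(dℓ) = exp(α²θ/(2s)) for all s > 0. -/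
/-!
With `c = α²θ/2`, the density is `∑ₙ cⁿ⁺¹ ℓⁿ / (n! (n+1)!) = √(c/ℓ) I₁(2√(cℓ))`. Its terms are
nonnegative, so monotone convergence lets us take the Laplace transform term by term. Since
`∫₀^∞ ℓⁿ e^{-sℓ} dℓ = n!/sⁿ⁺¹`, the `n`-th term contributes `(c/s)ⁿ⁺¹/(n+1)!`, and together with the
atom at `0`, which contributes `1`, these are exactly the terms of the exponential series of `c/s`.
-/

open MeasureTheory Real Set
open scoped Nat

noncomputable section

def besselCoeff (c : ℝ) (n : ℕ) : ℝ :=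
  1 / ((n ! : ℝ) * ((n + 1)! : ℝ)) * c ^ (n + 1)

def besselDensity (c ℓ : ℝ) : ℝ :=
  ∑' n : ℕ, besselCoeff c n * ℓ ^ n

def besselMeasure (c : ℝ) : Measure ℝ :=
  Measure.dirac 0 + volume.withDensity fun ℓ => ENNReal.ofReal ((Ici 0).indicator (besselDensity c) ℓ)

end

lemma besselCoeff_nonneg {c : ℝ} (hc : 0 ≤ c) (n : ℕ) : 0 ≤ besselCoeff c n := by
  unfold besselCoeff
  positivity

lemma summable_besselCoeff_mul_pow (c ℓ : ℝ) :
    Summable fun n : ℕ => besselCoeff c n * ℓ ^ n := by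
  refine .of_norm_bounded ((summable_pow_div_factorial |c * ℓ|).mul_left |c|) fun n => ?_
  have hfac : (n ! : ℝ) ≤ n ! * (n + 1)! :=
    le_mul_of_one_le_right (by positivity) (mod_cast (n + 1).factorial_pos)
  calc ‖besselCoeff c n * ℓ ^ n‖ = |c| * |c * ℓ| ^ n / (n ! * (n + 1)!) := by
        rw [besselCoeff, norm_mul, norm_mul, norm_div, norm_pow, norm_pow, abs_mul, mul_pow,
          pow_succ]
        simp only [norm_one, Real.norm_eq_abs, Nat.abs_cast, abs_mul]
        ring
    _ ≤ |c| * (|c * ℓ| ^ n / n !) := by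
        rw [← mul_div_assoc]
        gcongr

lemma ofReal_indicator_besselDensity {c : ℝ} (hc : 0 ≤ c) :
    (fun ℓ => ENNReal.ofReal ((Ici 0).indicator (besselDensity c) ℓ)) =
      (Ici 0).indicator fun ℓ => ∑' n : ℕ, ENNReal.ofReal (besselCoeff c n * ℓ ^ n) := by
  ext ℓ
  by_cases hℓ : ℓ ∈ Ici 0
  · have hℓ' : (0 : ℝ) ≤ ℓ := hℓ
    rw [indicator_of_mem hℓ, indicator_of_mem hℓ, besselDensity,
      ENNReal.ofReal_tsum_of_nonneg (fun n => mul_nonneg (besselCoeff_nonneg hc n) (by positivity))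
        (summable_besselCoeff_mul_pow c ℓ)]
  · simp [indicator_of_notMem hℓ]

lemma lintegral_pow_mul_exp_neg_mul_Ici (n : ℕ) {s : ℝ} (hs : 0 < s) :
    ∫⁻ t in Ici 0, ENNReal.ofReal (t ^ n * exp (-s * t)) = ENNReal.ofReal (n ! / s ^ (n + 1)) := by
  have hint := integrableOn_rpow_mul_exp_neg_mul_rpow (p := 1) (s := n) (b := s)
    (by linarith [n.cast_nonneg (α := ℝ)]) one_pos hs
  have hGamma := integral_rpow_mul_exp_neg_mul_Ioi (a := n + 1) (by positivity) hs
  simp only [rpow_one, rpow_natCast] at hint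
  rw [add_sub_cancel_right, rpow_add_one (by positivity), Gamma_nat_eq_factorial] at hGamma
  simp only [rpow_natCast] at hGamma
  rw [setLIntegral_congr Ioi_ae_eq_Ici.symm, ← ofReal_integral_eq_lintegral_ofReal hint
    (ae_restrict_of_forall_mem measurableSet_Ioi fun t (ht : 0 < t) => by positivity)]
  simp only [neg_mul]
  rw [hGamma, one_div_pow, pow_succ]
  congr 1
  field_simp

lemma hasSum_pow_succ_div_factorial (x : ℝ) :
    HasSum (fun n : ℕ => x ^ (n + 1) / (n + 1)!) (exp x - 1) := by
  simpa [← exp_eq_exp_ℝ] using (hasSum_nat_add_iff' 1).mpr (NormedSpace.expSeries_div_hasSum_exp x)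

lemma lintegral_besselCoeff_mul_pow_mul_exp_neg_mul_Ici {c s : ℝ} (hc : 0 ≤ c) (hs : 0 < s)
    (n : ℕ) :
    ∫⁻ ℓ in Ici 0, ENNReal.ofReal (besselCoeff c n * ℓ ^ n) * ENNReal.ofReal (exp (-s * ℓ)) =
      ENNReal.ofReal ((c / s) ^ (n + 1) / (n + 1)!) := by
  simp_rw [← ENNReal.ofReal_mul' (exp_pos _).le, mul_assoc (besselCoeff c n),
    ENNReal.ofReal_mul (besselCoeff_nonneg hc n)]
  rw [lintegral_const_mul' _ _ ENNReal.ofReal_ne_top, lintegral_pow_mul_exp_neg_mul_Ici n hs,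
    ← ENNReal.ofReal_mul (besselCoeff_nonneg hc n), besselCoeff, div_pow]
  congr 1
  field_simp

lemma lintegral_exp_neg_mul_withDensity_besselDensity {c s : ℝ} (hc : 0 ≤ c) (hs : 0 < s) :
    ∫⁻ ℓ, ENNReal.ofReal (exp (-s * ℓ))
        ∂volume.withDensity (fun ℓ => ENNReal.ofReal ((Ici 0).indicator (besselDensity c) ℓ)) =
      ENNReal.ofReal (exp (c / s) - 1) := by
  rw [ofReal_indicator_besselDensity hc, withDensity_indicator measurableSet_Ici,
    lintegral_withDensity_eq_lintegral_mul _ (Measurable.tsum fun n => by fun_prop) (by fun_prop)]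
  simp only [Pi.mul_apply, ← ENNReal.tsum_mul_right]
  rw [lintegral_tsum fun n => by fun_prop]
  simp only [lintegral_besselCoeff_mul_pow_mul_exp_neg_mul_Ici hc hs]
  have hexp := hasSum_pow_succ_div_factorial (c / s)
  rw [← ENNReal.ofReal_tsum_of_nonneg (fun n => by positivity) hexp.summable, hexp.tsum_eq]

lemma lintegral_exp_neg_mul_besselMeasure {c s : ℝ} (hc : 0 ≤ c) (hs : 0 < s) :
    ∫⁻ ℓ, ENNReal.ofReal (exp (-s * ℓ)) ∂besselMeasure c = ENNReal.ofReal (exp (c / s)) := by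
  rw [besselMeasure, lintegral_add_measure, lintegral_dirac,
    lintegral_exp_neg_mul_withDensity_besselDensity hc hs, mul_zero, exp_zero,
    ← ENNReal.ofReal_add zero_le_one (sub_nonneg.2 (one_le_exp (by positivity))),
    add_sub_cancel]

theorem laplace_transform_bessel_measure_general (α θ : ℝ) (hθ : 0 < θ) :
    ∀ s : ℝ, 0 < s →
      (∫ ℓ, Real.exp (-s * ℓ)
          ∂(Measure.dirac (0 : ℝ) +
            volume.withDensity (fun ℓ => ENNReal.ofReal
              (Set.indicator (Set.Ici (0 : ℝ))
                (fun ℓ => ∑' n : ℕ,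
                  (1 / ((n.factorial : ℝ) * ((n + 1).factorial : ℝ))) *
                    (α ^ 2 * θ / 2) ^ (n + 1) * ℓ ^ n) ℓ)))) =
        Real.exp (α ^ 2 * θ / (2 * s)) := by
  intro s hs
  change ∫ ℓ, exp (-s * ℓ) ∂besselMeasure (α ^ 2 * θ / 2) = _
  rw [integral_eq_lintegral_of_nonneg_ae (ae_of_all _ fun ℓ => (exp_pos _).le) (by fun_prop),
    lintegral_exp_neg_mul_besselMeasure (by positivity) hs, ENNReal.toReal_ofReal (exp_pos _).le,
    div_div]

/-- the measure `μ(dℓ) = δ₀(dℓ) + (Σ_{n≥0} (1/(n!(n+1)!)) (α²θ/2)^{n+1} ℓⁿ) 1_{[0,∞)}(ℓ) dℓ`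
has Laplace transform `∫ e^{−sℓ} μ(dℓ) = exp(α²θ/(2s))` for every `s > 0`. -/
theorem laplace_transform_bessel_measure (α θ : ℝ) (hα : 0 < α) (hθ : 0 < θ) :
    ∀ s : ℝ, 0 < s →
      (∫ ℓ, Real.exp (-s * ℓ)
          ∂(Measure.dirac (0 : ℝ) +
            volume.withDensity (fun ℓ => ENNReal.ofReal
              (Set.indicator (Set.Ici (0 : ℝ))
                (fun ℓ => ∑' n : ℕ,
                  (1 / ((n.factorial : ℝ) * ((n + 1).factorial : ℝ))) *
                    (α ^ 2 * θ / 2) ^ (n + 1) * ℓ ^ n) ℓ)))) =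
        Real.exp (α ^ 2 * θ / (2 * s)) :=
  laplace_transform_bessel_measure_general α θ hθ
end
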